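/- arXiv:2212.14778 — 6 statements merged into one kernel-verified Lean document; each statement's English description precedes it below -/
import Mathlib

section
/- Let ℓ be a prime, n ≥ 1, and 𝐝 = (d₁,…,dₙ) ∈ ℕⁿ with all dᵢ ≥ 1. If ℓ ≤ 1 + min{dᵢ : 1 ≤ i ≤ n}, then δₙ(ℓ,𝐝) = 1 − (1 − (1 − 1/ℓ)ⁿ)^ℓ. Equivalently, the number of n-tuples (P₁,…,Pₙ) of polynomials in 𝔽_ℓ[t] with deg Pᵢ ≤ dᵢ such that P₁⋯Pₙ does not vanish identically on 𝔽_ℓ equals ℓ^{n+d₁+⋯+dₙ} · (1 − (1 − (1 − 1/ℓ)ⁿ)^ℓ). -/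
/-!
Once `q ≤ dᵢ + 1`, evaluation at the `q` points of `𝔽_q` maps the polynomials of degree `≤ dᵢ`
additively onto all functions `𝔽_q → 𝔽_q` (Lagrange interpolation), so all of its fibres have the
same size. Counting tuples `(P₁, …, Pₙ)` therefore reduces to counting tuples of functions
`(g₁, …, gₙ)` whose product is not identically zero: a random vector of `𝔽_qⁿ` has nonzero
product with probability `(1 - 1/q)ⁿ`, independently at each of the `q` points.
-/

open Polynomial

theorem AddMonoidHom.card_subtype_comp_mul_card {G H : Type*} [AddGroup G] [AddGroup H] [Finite G]
    (f : G →+ H) (hf : Function.Surjective f) (p : H → Prop) :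
    Nat.card {g // p (f g)} * Nat.card H = Nat.card G * Nat.card {h // p h} := by
  have : Finite H := Finite.of_surjective f hf
  have card_preimage (q : H → Prop) :
      Nat.card {g // q (f g)} = Nat.card {h // q h} * Nat.card f.ker := by
    have := Fintype.ofFinite {h // q h}
    have card_fiber (h : H) : Nat.card {g // f g = h} = Nat.card f.ker :=
      Nat.card_congr (f.fiberEquivKerOfSurjective hf h)
    rw [← Nat.card_congr (Equiv.sigmaSubtypeFiberEquivSubtype f fun _ => Iff.rfl), Nat.card_sigma]
    simp only [card_fiber, Finset.sum_const, Finset.card_univ, smul_eq_mul, Nat.card_eq_fintype_card]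
  have card_G := card_preimage fun _ => True
  simp only [Nat.card_congr (Equiv.subtypeUnivEquiv (p := fun _ => True) fun _ => trivial)] at card_G
  rw [card_preimage, card_G]
  ring

theorem Nat.card_subtype_add_card_subtype_not {α : Type*} [Finite α] (p : α → Prop) :
    Nat.card {a // p a} + Nat.card {a // ¬ p a} = Nat.card α := by
  classical
  rw [← Nat.card_sum, Nat.card_congr (Equiv.sumCompl p)]

theorem Nat.card_subtype_forall_comp_apply {ι α M : Type*} [Finite α] (p : (ι → M) → Prop) :
    Nat.card {g : ι → α → M // ∀ x, p fun i => g i x} = Nat.card {v // p v} ^ Nat.card α := by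
  rw [← Nat.card_fun]
  exact Nat.card_congr (((Equiv.piComm _).subtypeEquiv fun _ => Iff.rfl).trans Equiv.subtypePiEquivPi)

section ZeroProduct

variable {ι α M₀ : Type*} [Fintype ι] [CommMonoidWithZero M₀] [NoZeroDivisors M₀] [Nontrivial M₀]
  [Finite M₀]

theorem Nat.card_subtype_prod_ne_zero :
    Nat.card {v : ι → M₀ // ∏ i, v i ≠ 0} = (Nat.card M₀ - 1) ^ Fintype.card ι := by
  have e : {v : ι → M₀ // ∏ i, v i ≠ 0} ≃ (ι → {a : M₀ // a ≠ 0}) :=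
    (Equiv.subtypeEquivRight fun v => Finset.prod_ne_zero_iff.trans (by simp)).trans
      Equiv.subtypePiEquivPi
  have := Nat.card_subtype_add_card_subtype_not fun a : M₀ => a = 0
  rw [Nat.card_unique] at this
  rw [Nat.card_congr e, Nat.card_fun, Nat.card_eq_fintype_card (α := ι)]
  congr 1
  simp only [ne_eq] at this ⊢
  omega

theorem Nat.card_subtype_prod_eq_zero :
    (Nat.card {v : ι → M₀ // ∏ i, v i = 0} : ℝ)
      = Nat.card (ι → M₀) * (1 - (1 - 1 / (Nat.card M₀ : ℝ)) ^ Fintype.card ι) := by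
  have hsum := Nat.card_subtype_add_card_subtype_not fun v : ι → M₀ => ∏ i, v i = 0
  rw [Nat.card_subtype_prod_ne_zero, Nat.card_fun, Nat.card_eq_fintype_card (α := ι)] at hsum
  rw [Nat.card_fun, Nat.card_eq_fintype_card (α := ι)]
  have hpow : ((Nat.card M₀ : ℝ) - 1) ^ Fintype.card ι
      = (Nat.card M₀ : ℝ) ^ Fintype.card ι * (1 - 1 / (Nat.card M₀ : ℝ)) ^ Fintype.card ι := by
    rw [← mul_pow, mul_one_sub, mul_one_div_cancel (Nat.cast_ne_zero.2 Nat.card_pos.ne')]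
  have := congrArg (Nat.cast : ℕ → ℝ) hsum
  push_cast [Nat.cast_sub Nat.card_pos] at this ⊢
  linear_combination this - hpow

theorem Nat.card_subtype_exists_prod_ne_zero [Finite α] :
    (Nat.card {g : ι → α → M₀ // ∃ x, ∏ i, g i x ≠ 0} : ℝ) = Nat.card (ι → α → M₀) *
      (1 - (1 - (1 - 1 / (Nat.card M₀ : ℝ)) ^ Fintype.card ι) ^ Nat.card α) := by
  have hsum := Nat.card_subtype_add_card_subtype_not fun g : ι → α → M₀ => ∃ x, ∏ i, g i x ≠ 0
  simp only [not_exists, not_not] at hsum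
  rw [Nat.card_subtype_forall_comp_apply fun v : ι → M₀ => ∏ i, v i = 0] at hsum
  have htotal : Nat.card (ι → α → M₀) = Nat.card (ι → M₀) ^ Nat.card α := by
    simp only [Nat.card_fun]; ring
  have := congrArg (Nat.cast : ℕ → ℝ) hsum
  push_cast [htotal, Nat.card_subtype_prod_eq_zero, mul_pow] at this ⊢
  linear_combination this

end ZeroProduct

namespace Polynomial

section Semiring

variable (R : Type*) [Semiring R] {ι : Type*}

def piEvalDegreeLT (m : ι → ℕ) : (∀ i, degreeLT R (m i)) →+ (ι → R → R) where
  toFun P i x := (P i : R[X]).eval x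
  map_zero' := by ext; simp
  map_add' P Q := by ext; simp

@[simp]
theorem piEvalDegreeLT_apply (m : ι → ℕ) (P : ∀ i, degreeLT R (m i)) (i : ι) (x : R) :
    piEvalDegreeLT R m P i x = (P i : R[X]).eval x :=
  rfl

variable {R}

theorem card_subtype_natDegree_le_and (d : ι → ℕ) (p : (ι → R[X]) → Prop) :
    Nat.card {P : ι → R[X] // (∀ i, (P i).natDegree ≤ d i) ∧ p P}
      = Nat.card {v : ∀ i, degreeLT R (d i + 1) // p fun i => v i} := by
  have mem_iff (q : R[X]) (i : ι) : q ∈ degreeLT R (d i + 1) ↔ q.natDegree ≤ d i := by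
    rw [degreeLT_succ_eq_degreeLE, mem_degreeLE, natDegree_le_iff_degree_le]
  exact Nat.card_congr
    { toFun P := ⟨fun i => ⟨P.1 i, (mem_iff _ i).2 (P.2.1 i)⟩, P.2.2⟩
      invFun v := ⟨fun i => v.1 i, fun i => (mem_iff _ i).1 (v.1 i).2, v.2⟩
      left_inv _ := rfl
      right_inv _ := rfl }

instance [Finite R] (m : ℕ) : Finite (degreeLT R m) :=
  .of_equiv _ (degreeLTEquiv R m).toEquiv.symm

theorem card_pi_degreeLT [Fintype R] [Fintype ι] (m : ι → ℕ) :
    Nat.card (∀ i, degreeLT R (m i)) = Fintype.card R ^ ∑ i, m i := by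
  simp [Nat.card_pi, Nat.card_congr (degreeLTEquiv R _).toEquiv, Finset.prod_pow_eq_pow_sum]

end Semiring

variable {F : Type*} [Field F] [Fintype F] {ι : Type*}

theorem exists_mem_degreeLT_card_eval_eq (g : F → F) :
    ∃ p ∈ degreeLT F (Fintype.card F), ∀ x, p.eval x = g x := by
  classical
  have hinj : Set.InjOn id ((Finset.univ : Finset F) : Set F) := Set.injOn_id _
  exact ⟨Lagrange.interpolate Finset.univ id g,
    mem_degreeLT.2 (Lagrange.degree_interpolate_lt _ hinj),
    fun x => Lagrange.eval_interpolate_at_node _ hinj (Finset.mem_univ x)⟩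

theorem piEvalDegreeLT_surjective {m : ι → ℕ} (hm : ∀ i, Fintype.card F ≤ m i) :
    Function.Surjective (piEvalDegreeLT F m) := by
  intro g
  choose p hp heval using fun i => exists_mem_degreeLT_card_eval_eq (g i)
  exact ⟨fun i => ⟨p i, degreeLT_mono (hm i) (hp i)⟩, funext₂ heval⟩

end Polynomial

theorem schinzel_density_small_prime_general
    (ℓ : ℕ) (hℓ : ℓ.Prime) (n : ℕ)
    (d : Fin n → ℕ) (hsmall : ∀ i, ℓ ≤ 1 + d i) :
    (Nat.card {P : Fin n → Polynomial (ZMod ℓ) //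
        (∀ i, (P i).natDegree ≤ d i) ∧ ∃ x : ZMod ℓ, (∏ i, P i).eval x ≠ 0} : ℝ)
      = (ℓ : ℝ) ^ (n + ∑ i, d i) *
        (1 - (1 - (1 - 1 / (ℓ : ℝ)) ^ n) ^ ℓ) := by
  have : Fact ℓ.Prime := ⟨hℓ⟩
  have hsurj := piEvalDegreeLT_surjective (F := ZMod ℓ) (m := fun i => d i + 1)
    fun i => by rw [ZMod.card]; linarith [hsmall i]
  have hcount := congrArg (Nat.cast : ℕ → ℝ) <|
    (piEvalDegreeLT (ZMod ℓ) fun i => d i + 1).card_subtype_comp_mul_card hsurj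
      fun g => ∃ x, ∏ i, g i x ≠ 0
  push_cast [piEvalDegreeLT_apply, Nat.card_subtype_exists_prod_ne_zero, card_pi_degreeLT,
    ZMod.card, Nat.card_zmod, Fintype.card_fin, Finset.sum_add_distrib] at hcount
  simp_rw [eval_prod]
  rw [card_subtype_natDegree_le_and d fun P => ∃ x, ∏ i, (P i).eval x ≠ 0]
  refine mul_right_cancel₀ (Nat.cast_ne_zero.2 Nat.card_pos.ne') (hcount.trans ?_)
  simp only [Finset.sum_const, Finset.card_univ, Fintype.card_fin, smul_eq_mul, mul_one]
  ring

/-- **Density of Schinzel `n`-tuples mod `ℓ` for small `ℓ`.**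
If `ℓ ≤ 1 + min dᵢ`, then the number of `n`-tuples of polynomials over `𝔽_ℓ`
with `deg Pᵢ ≤ dᵢ` whose product does not vanish identically on `𝔽_ℓ` equals
`ℓ^{n + Σ dᵢ}·(1 − (1 − (1 − 1/ℓ)ⁿ)^ℓ)`. -/
theorem schinzel_density_small_prime
    (ℓ : ℕ) (hℓ : ℓ.Prime) (n : ℕ) (hn : 1 ≤ n)
    (d : Fin n → ℕ) (hd : ∀ i, 1 ≤ d i) (hsmall : ∀ i, ℓ ≤ 1 + d i) :
    (Nat.card {P : Fin n → Polynomial (ZMod ℓ) //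
        (∀ i, (P i).natDegree ≤ d i) ∧ ∃ x : ZMod ℓ, (∏ i, P i).eval x ≠ 0} : ℝ)
      = (ℓ : ℝ) ^ (n + ∑ i, d i) *
        (1 - (1 - (1 - 1 / (ℓ : ℝ)) ^ n) ^ ℓ) :=
  schinzel_density_small_prime_general ℓ hℓ n d hsmall
end

section
/- Let ℓ be a prime, n ≥ 1, and 𝐝 = (d₁,…,dₙ) ∈ ℕⁿ with all dᵢ ≥ 1 and d = d₁+⋯+dₙ. If ℓ > d, then δₙ(ℓ,𝐝) = ∏_{i=1}^{n} (1 − 1/ℓ^{dᵢ+1}). Equivalently, the number of n-tuples (P₁,…,Pₙ) of polynomials in 𝔽_ℓ[t] with deg Pᵢ ≤ dᵢ such that P₁⋯Pₙ does not vanish identically on 𝔽_ℓ equals ∏_{i=1}^{n} (ℓ^{dᵢ+1} − 1). -/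
open Polynomial

lemma natDegree_le_iff_mem_degreeLT {K : Type*} [Field K] (m : ℕ) (p : K[X]) :
    p.natDegree ≤ m ↔ p ∈ degreeLT K (m + 1) := by
  rw [Polynomial.mem_degreeLT]
  constructor
  · intro h
    exact lt_of_le_of_lt (Polynomial.natDegree_le_iff_degree_le.mp h)
      (by exact_mod_cast Nat.lt_succ_self m)
  · intro h
    by_cases hp : p = 0
    · simp [hp]
    · have := (Polynomial.natDegree_lt_iff_degree_lt hp).mpr h
      omega

lemma count_aux (K : Type*) [Field K] [Fintype K] [DecidableEq K] (m : ℕ) :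
    Nat.card {p : K[X] // p.natDegree ≤ m ∧ p ≠ 0} = Fintype.card K ^ (m + 1) - 1 := by
  have e : {p : K[X] // p.natDegree ≤ m ∧ p ≠ 0} ≃ {v : Fin (m + 1) → K // v ≠ 0} :=
    { toFun := fun p => ⟨degreeLTEquiv K (m + 1)
        ⟨p.1, (natDegree_le_iff_mem_degreeLT m p.1).mp p.2.1⟩,
        fun h => p.2.2 ((Polynomial.degreeLTEquiv_eq_zero_iff_eq_zero _).mp h)⟩
      invFun := fun v => ⟨((degreeLTEquiv K (m + 1)).symm v.1 : K[X]),
        (natDegree_le_iff_mem_degreeLT m _).mpr ((degreeLTEquiv K (m + 1)).symm v.1).2,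
        by
          intro h
          apply v.2
          have h2 : (degreeLTEquiv K (m + 1)).symm v.1 = 0 := Subtype.ext h
          have := congrArg (degreeLTEquiv K (m + 1)) h2
          simpa using this⟩
      left_inv := fun p => by
        ext
        simp
      right_inv := fun v => by
        ext
        simp }
  rw [Nat.card_congr e, Nat.card_eq_fintype_card]
  have : Fintype.card {v : Fin (m + 1) → K // v ≠ 0}
      = Fintype.card (Fin (m + 1) → K) - Fintype.card {v : Fin (m + 1) → K // v = 0} := by
    exact Fintype.card_subtype_compl _
  rw [this, Fintype.card_subtype_eq (0 : Fin (m + 1) → K)]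
  simp

/-- **Density of Schinzel `n`-tuples mod `ℓ` for large `ℓ`.**
If `ℓ > d = Σ dᵢ`, then the number of `n`-tuples of polynomials over `𝔽_ℓ`
with `deg Pᵢ ≤ dᵢ` whose product does not vanish identically on `𝔽_ℓ` equals
`∏ᵢ (ℓ^{dᵢ+1} − 1)`. -/
theorem schinzel_density_large_prime
    (ℓ : ℕ) (hℓ : ℓ.Prime) (n : ℕ) (hn : 1 ≤ n)
    (d : Fin n → ℕ) (hd : ∀ i, 1 ≤ d i) (hlarge : (∑ i, d i) < ℓ) :
    Nat.card {P : Fin n → Polynomial (ZMod ℓ) //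
        (∀ i, (P i).natDegree ≤ d i) ∧ ∃ x : ZMod ℓ, (∏ i, P i).eval x ≠ 0}
      = ∏ i, (ℓ ^ (d i + 1) - 1) := by
  haveI : Fact ℓ.Prime := ⟨hℓ⟩
  have key : ∀ P : Fin n → Polynomial (ZMod ℓ),
      ((∀ i, (P i).natDegree ≤ d i) ∧ ∃ x : ZMod ℓ, (∏ i, P i).eval x ≠ 0) ↔
      ∀ i, (P i).natDegree ≤ d i ∧ P i ≠ 0 := by
    intro P
    constructor
    · rintro ⟨hdeg, x, hx⟩ i
      refine ⟨hdeg i, ?_⟩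
      intro h0
      apply hx
      rw [Finset.prod_eq_zero (Finset.mem_univ i) h0]
      simp
    · intro h
      refine ⟨fun i => (h i).1, ?_⟩
      have hne : (∏ i, P i) ≠ 0 := Finset.prod_ne_zero_iff.mpr fun i _ => (h i).2
      have hdeg : (∏ i, P i).natDegree < ℓ := by
        calc (∏ i, P i).natDegree ≤ ∑ i, (P i).natDegree := Polynomial.natDegree_prod_le _ _
          _ ≤ ∑ i, d i := Finset.sum_le_sum fun i _ => (h i).1
          _ < ℓ := hlarge
      apply Polynomial.exists_eval_ne_zero_of_natDegree_lt_card _ hne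
      rw [Cardinal.mk_fintype, ZMod.card]
      exact_mod_cast hdeg
  have e1 : {P : Fin n → Polynomial (ZMod ℓ) //
        (∀ i, (P i).natDegree ≤ d i) ∧ ∃ x : ZMod ℓ, (∏ i, P i).eval x ≠ 0}
      ≃ ∀ i, {p : Polynomial (ZMod ℓ) // p.natDegree ≤ d i ∧ p ≠ 0} :=
    (Equiv.subtypeEquivRight key).trans (Equiv.subtypePiEquivPi (p := fun i (p : Polynomial (ZMod ℓ)) => p.natDegree ≤ d i ∧ p ≠ 0))
  rw [Nat.card_congr e1, Nat.card_pi]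
  refine Finset.prod_congr rfl fun i _ => ?_
  rw [count_aux (ZMod ℓ) (d i), ZMod.card]
end

section
/- For every prime ℓ and all d₁, d₂ ≥ 1, one has δ₂(ℓ,(d₁,d₂)) ≥ (1 − 1/ℓ^{1+d₁})·(1 − 1/ℓ^{1+d₂}) − 2^ℓ/ℓ^ℓ. -/
/-!
Over a field with `q` elements, there are `(q^(d₁+1) - 1)(q^(d₂+1) - 1)` pairs of nonzero
polynomials of degrees at most `d₁, d₂`. If such a product `P₁ P₂` vanishes on the whole field and
`S` is the zero set of `P₁`, then `P₂` vanishes on the complement of `S`, so `P₁` and `P₂` are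
multiples of `∏_{a ∈ S} (X - a)` and `∏_{a ∉ S} (X - a)`. For each of the `2^q` sets `S` this
leaves at most `q^(d₁+d₂+2-q)` pairs of cofactors.
-/

open Polynomial Finset

theorem Lagrange.nodal_id_dvd_of_forall_eval_eq_zero {R : Type*} [CommRing R] [IsDomain R]
    {s : Finset R} {p : R[X]} (h : ∀ a ∈ s, p.eval a = 0) : nodal s id ∣ p := by
  rcases eq_or_ne p 0 with rfl | hp
  · exact dvd_zero _
  rw [nodal_eq]
  exact (Multiset.prod_X_sub_C_dvd_iff_le_roots hp s.val).mpr <|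
    (Multiset.le_iff_subset s.nodup).mpr fun a ha => (mem_roots hp).mpr (h a ha)

theorem Lagrange.exists_eq_nodal_id_mul_of_forall_eval_eq_zero {R : Type*} [CommRing R]
    [IsDomain R] {s : Finset R} {p : R[X]} {d : ℕ} (hp : p ≠ 0) (hd : p.natDegree ≤ d)
    (h : ∀ a ∈ s, p.eval a = 0) :
    ∃ q : R[X], q.natDegree + #s ≤ d ∧ p = nodal s id * q := by
  obtain ⟨q, rfl⟩ := nodal_id_dvd_of_forall_eval_eq_zero h
  refine ⟨q, ?_, rfl⟩
  rwa [natDegree_mul nodal_ne_zero (right_ne_zero_of_mul hp), natDegree_nodal, add_comm] at hd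

namespace Polynomial

variable (F : Type*) [Field F] [Fintype F]

noncomputable def natDegreeLE (d : ℕ) : Finset F[X] :=
  univ.map ⟨fun c => ((degreeLTEquiv F (d + 1)).symm c : F[X]),
    Subtype.val_injective.comp (degreeLTEquiv F (d + 1)).symm.injective⟩

variable {F}

theorem mem_natDegreeLE {d : ℕ} {p : F[X]} : p ∈ natDegreeLE F d ↔ p.natDegree ≤ d := by
  have hmem : p ∈ degreeLT F (d + 1) ↔ p.natDegree ≤ d := by
    rw [degreeLT_succ_eq_degreeLE, mem_degreeLE, natDegree_le_iff_degree_le]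
  simp only [natDegreeLE, mem_map, mem_univ, true_and, Function.Embedding.coeFn_mk]
  constructor
  · rintro ⟨c, rfl⟩
    exact hmem.mp ((degreeLTEquiv F (d + 1)).symm c).2
  · intro hp
    exact ⟨degreeLTEquiv F (d + 1) ⟨p, hmem.mpr hp⟩, by simp⟩

theorem card_natDegreeLE (d : ℕ) : #(natDegreeLE F d) = Fintype.card F ^ (d + 1) := by
  simp [natDegreeLE]

end Polynomial

section VanishingPairs

open Lagrange
open scoped Classical

variable (F : Type*) [Field F] [Fintype F] (d₁ d₂ : ℕ)

noncomputable def nonvanishingPairs : Finset (F[X] × F[X]) :=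
  {p ∈ natDegreeLE F d₁ ×ˢ natDegreeLE F d₂ | ∃ x, (p.1 * p.2).eval x ≠ 0}

noncomputable def vanishingNonzeroPairs : Finset (F[X] × F[X]) :=
  {p ∈ (natDegreeLE F d₁).erase 0 ×ˢ (natDegreeLE F d₂).erase 0 | ∀ x, (p.1 * p.2).eval x = 0}

variable {F d₁ d₂}

theorem card_nonzeroPairs_le :
    #((natDegreeLE F d₁).erase 0 ×ˢ (natDegreeLE F d₂).erase 0) ≤
      #(nonvanishingPairs F d₁ d₂) + #(vanishingNonzeroPairs F d₁ d₂) := by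
  refine (card_le_card fun p hp => ?_).trans (card_union_le _ _)
  by_cases h : ∃ x, (p.1 * p.2).eval x ≠ 0
  · refine mem_union_left _ (mem_filter.mpr ⟨?_, h⟩)
    obtain ⟨h₁, h₂⟩ := mem_product.mp hp
    exact mem_product.mpr ⟨mem_of_mem_erase h₁, mem_of_mem_erase h₂⟩
  · simp only [not_exists, not_not] at h
    exact mem_union_right _ (mem_filter.mpr ⟨hp, h⟩)

theorem exists_eq_nodal_mul_of_mem_vanishingNonzeroPairs {p : F[X] × F[X]}
    (hp : p ∈ vanishingNonzeroPairs F d₁ d₂) :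
    ∃ q₁ q₂ : F[X], q₁.natDegree + #p.1.roots.toFinset ≤ d₁ ∧
      q₂.natDegree + #p.1.roots.toFinsetᶜ ≤ d₂ ∧
      p = (nodal p.1.roots.toFinset id * q₁, nodal p.1.roots.toFinsetᶜ id * q₂) := by
  simp only [vanishingNonzeroPairs, mem_filter, mem_product, mem_erase, mem_natDegreeLE,
    eval_mul] at hp
  obtain ⟨⟨⟨hp₁, hd₁⟩, hp₂, hd₂⟩, hvanish⟩ := hp
  obtain ⟨q₁, hq₁, he₁⟩ := exists_eq_nodal_id_mul_of_forall_eval_eq_zero hp₁ hd₁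
    fun a ha => (mem_roots hp₁).mp (Multiset.mem_toFinset.mp ha)
  obtain ⟨q₂, hq₂, he₂⟩ := exists_eq_nodal_id_mul_of_forall_eval_eq_zero hp₂ hd₂
    fun a ha => (mul_eq_zero.mp (hvanish a)).resolve_left fun h =>
      mem_compl.mp ha (Multiset.mem_toFinset.mpr ((mem_roots hp₁).mpr h))
  exact ⟨q₁, q₂, hq₁, hq₂, Prod.ext he₁ he₂⟩

theorem card_filter_roots_toFinset_eq_mul_le (S : Finset F) :
    #{p ∈ vanishingNonzeroPairs F d₁ d₂ | p.1.roots.toFinset = S} *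
      Fintype.card F ^ Fintype.card F ≤ Fintype.card F ^ (d₁ + d₂ + 2) := by
  set fiber := {p ∈ vanishingNonzeroPairs F d₁ d₂ | p.1.roots.toFinset = S}
  rcases fiber.eq_empty_or_nonempty with hempty | ⟨p₀, hp₀⟩
  · simp [hempty]
  have hfactor : ∀ p ∈ fiber, ∃ q₁ q₂ : F[X], q₁.natDegree + #S ≤ d₁ ∧
      q₂.natDegree + #Sᶜ ≤ d₂ ∧ p = (nodal S id * q₁, nodal Sᶜ id * q₂) := by
    intro p hp
    obtain ⟨hmem, hroots⟩ := mem_filter.mp hp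
    exact hroots ▸ exists_eq_nodal_mul_of_mem_vanishingNonzeroPairs hmem
  obtain ⟨_, _, hS₁, hS₂, -⟩ := hfactor p₀ hp₀
  have hsub : fiber ⊆ (natDegreeLE F (d₁ - #S) ×ˢ natDegreeLE F (d₂ - #Sᶜ)).image
      fun q => (nodal S id * q.1, nodal Sᶜ id * q.2) := by
    intro p hp
    obtain ⟨q₁, q₂, hq₁, hq₂, rfl⟩ := hfactor p hp
    exact mem_image.mpr ⟨(q₁, q₂), mem_product.mpr
      ⟨mem_natDegreeLE.mpr (show q₁.natDegree ≤ _ by omega),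
        mem_natDegreeLE.mpr (show q₂.natDegree ≤ _ by omega)⟩, rfl⟩
  calc #fiber * Fintype.card F ^ Fintype.card F
      ≤ #(natDegreeLE F (d₁ - #S) ×ˢ natDegreeLE F (d₂ - #Sᶜ)) *
          Fintype.card F ^ (#S + #Sᶜ) := by
        rw [card_add_card_compl]
        exact Nat.mul_le_mul_right _ ((card_le_card hsub).trans card_image_le)
    _ = Fintype.card F ^ (d₁ + d₂ + 2) := by
        rw [card_product, card_natDegreeLE, card_natDegreeLE, ← pow_add, ← pow_add]
        congr 1
        omega

theorem card_vanishingNonzeroPairs_mul_le :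
    #(vanishingNonzeroPairs F d₁ d₂) * Fintype.card F ^ Fintype.card F ≤
      2 ^ Fintype.card F * Fintype.card F ^ (d₁ + d₂ + 2) := by
  rw [card_eq_sum_card_fiberwise (t := univ) (f := fun p => p.1.roots.toFinset)
    fun _ _ => mem_coe.mpr (mem_univ _), sum_mul]
  calc _ ≤ ∑ _S : Finset F, Fintype.card F ^ (d₁ + d₂ + 2) :=
        sum_le_sum fun S _ => card_filter_roots_toFinset_eq_mul_le S
    _ = _ := by rw [sum_const, card_univ, Fintype.card_finset, smul_eq_mul]

variable (F d₁ d₂) in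
theorem one_sub_mul_one_sub_sub_le_card_nonvanishingPairs_div :
    (1 - 1 / (Fintype.card F : ℝ) ^ (1 + d₁)) * (1 - 1 / (Fintype.card F : ℝ) ^ (1 + d₂))
        - 2 ^ Fintype.card F / (Fintype.card F : ℝ) ^ Fintype.card F
      ≤ #(nonvanishingPairs F d₁ d₂) / (Fintype.card F : ℝ) ^ (2 + d₁ + d₂) := by
  have hq : (0 : ℝ) < Fintype.card F := Nat.cast_pos.mpr Fintype.card_pos
  have hcard_erase (d : ℕ) :
      (#((natDegreeLE F d).erase 0) : ℝ) = (Fintype.card F : ℝ) ^ (d + 1) - 1 := by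
    rw [eq_sub_iff_add_eq]
    have hzero : (0 : F[X]) ∈ natDegreeLE F d := mem_natDegreeLE.mpr (by simp)
    exact_mod_cast (card_erase_add_one hzero).trans (card_natDegreeLE d)
  have hnonzero : ((Fintype.card F : ℝ) ^ (d₁ + 1) - 1) * ((Fintype.card F : ℝ) ^ (d₂ + 1) - 1)
      ≤ #(nonvanishingPairs F d₁ d₂) + #(vanishingNonzeroPairs F d₁ d₂) := by
    rw [← hcard_erase, ← hcard_erase]
    exact_mod_cast card_product _ _ ▸ card_nonzeroPairs_le
  have hvanishing : (#(vanishingNonzeroPairs F d₁ d₂) : ℝ) ≤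
      2 ^ Fintype.card F * (Fintype.card F : ℝ) ^ (d₁ + d₂ + 2) /
        (Fintype.card F : ℝ) ^ Fintype.card F := by
    rw [le_div_iff₀ (by positivity)]
    exact_mod_cast card_vanishingNonzeroPairs_mul_le
  rw [le_div_iff₀ (by positivity)]
  calc _ = ((Fintype.card F : ℝ) ^ (d₁ + 1) - 1) * ((Fintype.card F : ℝ) ^ (d₂ + 1) - 1) -
        2 ^ Fintype.card F * (Fintype.card F : ℝ) ^ (d₁ + d₂ + 2) /
          (Fintype.card F : ℝ) ^ Fintype.card F := by
        field_simp
        ring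
    _ ≤ _ := by linarith

end VanishingPairs

theorem schinzel_pair_density_lower_bound_general
    (ℓ : ℕ) (hℓ : ℓ.Prime) (d₁ d₂ : ℕ) :
    (1 - 1 / (ℓ : ℝ) ^ (1 + d₁)) * (1 - 1 / (ℓ : ℝ) ^ (1 + d₂))
        - 2 ^ ℓ / (ℓ : ℝ) ^ ℓ
      ≤ (Nat.card {P : Polynomial (ZMod ℓ) × Polynomial (ZMod ℓ) //
          P.1.natDegree ≤ d₁ ∧ P.2.natDegree ≤ d₂ ∧
          ∃ x : ZMod ℓ, (P.1 * P.2).eval x ≠ 0} : ℝ) /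
        (ℓ : ℝ) ^ (2 + d₁ + d₂) := by
  have : Fact ℓ.Prime := ⟨hℓ⟩
  rw [Nat.subtype_card (nonvanishingPairs (ZMod ℓ) d₁ d₂) fun P => by
    simp only [nonvanishingPairs, mem_filter, mem_product, mem_natDegreeLE, and_assoc]]
  simpa only [ZMod.card] using one_sub_mul_one_sub_sub_le_card_nonvanishingPairs_div (ZMod ℓ) d₁ d₂

/-- **Lower bound for the density of Schinzel pairs mod `ℓ`:**
`δ₂(ℓ,(d₁,d₂)) ≥ (1 − 1/ℓ^{1+d₁})(1 − 1/ℓ^{1+d₂}) − 2^ℓ/ℓ^ℓ`. -/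
theorem schinzel_pair_density_lower_bound
    (ℓ : ℕ) (hℓ : ℓ.Prime) (d₁ d₂ : ℕ) (hd₁ : 1 ≤ d₁) (hd₂ : 1 ≤ d₂) :
    (1 - 1 / (ℓ : ℝ) ^ (1 + d₁)) * (1 - 1 / (ℓ : ℝ) ^ (1 + d₂))
        - 2 ^ ℓ / (ℓ : ℝ) ^ ℓ
      ≤ (Nat.card {P : Polynomial (ZMod ℓ) × Polynomial (ZMod ℓ) //
          P.1.natDegree ≤ d₁ ∧ P.2.natDegree ≤ d₂ ∧
          ∃ x : ZMod ℓ, (P.1 * P.2).eval x ≠ 0} : ℝ) /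
        (ℓ : ℝ) ^ (2 + d₁ + d₂) :=
  schinzel_pair_density_lower_bound_general ℓ hℓ d₁ d₂
end

section
/- Let ℓ be a prime and d₁, d₂ ≥ 1. Let N be the number of pairs (P₁,P₂) of non-zero polynomials in 𝔽_ℓ[t] with deg Pᵢ ≤ dᵢ such that the product P₁(x)P₂(x) vanishes for every x ∈ 𝔽_ℓ. Then N ≤ 2^ℓ · ℓ^{2+d₁+d₂−ℓ}. -/
/-!
Sort the pairs `(P₁, P₂)` by the zero set `S` of `P₁` in a field with `q` elements. Then `P₁` is a
non-zero multiple of `∏_{a ∈ S} (X - a)`, leaving at most `q ^ (d₁ + 1 - |S|)` choices, and `P₂`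
must vanish on the complement of `S`, leaving at most `q ^ (d₂ + 1 - (q - |S|))` choices. Each of
the `2 ^ q` subsets `S` thus contributes at most `q ^ (d₁ + d₂ + 2 - q)` pairs.
-/

open Finset

namespace Polynomial

theorem mul_divByMonic_eq_of_dvd {R : Type*} [Ring R] {p q : R[X]} (hq : q.Monic) (h : q ∣ p) :
    q * (p /ₘ q) = p := by
  obtain ⟨r, rfl⟩ := h
  rw [mul_divByMonic_cancel_left r hq]

section DegreeLT

variable {R : Type*} [Semiring R] [Fintype R]

instance (n : ℕ) : Finite (degreeLT R n) :=
  Finite.of_equiv _ (degreeLTEquiv R n).toEquiv.symm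

theorem card_degreeLT (n : ℕ) : Nat.card (degreeLT R n) = Fintype.card R ^ n := by
  rw [Nat.card_congr (degreeLTEquiv R n).toEquiv, Nat.card_fun, Nat.card_eq_fintype_card,
    Nat.card_eq_fintype_card, Fintype.card_fin]

end DegreeLT

variable {F : Type*} [Field F]

def nonzeroVanishingOn (d : ℕ) (S : Finset F) : Set F[X] :=
  {Q | Q ≠ 0 ∧ Q.natDegree ≤ d ∧ ∀ a ∈ S, Q.eval a = 0}

theorem nodal_dvd_of_eval_eq_zero {S : Finset F} {Q : F[X]} (h : ∀ a ∈ S, Q.eval a = 0) :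
    Lagrange.nodal S id ∣ Q := by
  rw [Lagrange.nodal_eq]
  refine Finset.prod_dvd_of_coprime
    (fun a _ b _ hab => pairwise_coprime_X_sub_C (s := id) Function.injective_id hab) ?_
  exact fun a ha => dvd_iff_isRoot.mpr (h a ha)

section Finite

variable [Fintype F]

instance (d : ℕ) (S : Finset F) : Finite (nonzeroVanishingOn d S) :=
  have : Finite (degreeLT F (d + 1) : Set F[X]) := inferInstanceAs (Finite (degreeLT F (d + 1)))
  Finite.Set.subset _ fun _ ⟨_, hdeg, _⟩ =>
    mem_degreeLT.mpr <| degree_le_natDegree.trans_lt <| by exact_mod_cast Nat.lt_succ_of_le hdeg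

theorem card_nonzeroVanishingOn_mul_pow_le (d : ℕ) (S : Finset F) :
    Nat.card (nonzeroVanishingOn d S) * Fintype.card F ^ #S ≤ Fintype.card F ^ (d + 1) := by
  rcases isEmpty_or_nonempty (nonzeroVanishingOn d S) with _ | ⟨Q₀, hQ₀, hdeg₀, hvan₀⟩
  · simp
  have hmonic : (Lagrange.nodal S id).Monic := Lagrange.nodal_monic
  have hS : #S ≤ d := by
    rw [← Lagrange.natDegree_nodal (v := id)]
    exact (natDegree_le_of_dvd (nodal_dvd_of_eval_eq_zero hvan₀) hQ₀).trans hdeg₀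
  let quotient (Q : nonzeroVanishingOn d S) : degreeLT F (d + 1 - #S) :=
    ⟨Q.1 /ₘ Lagrange.nodal S id, mem_degreeLT.mpr <| degree_le_natDegree.trans_lt <| by
      have hdeg := Q.2.2.1
      rw [natDegree_divByMonic _ hmonic, Lagrange.natDegree_nodal]
      exact_mod_cast (by omega : Q.1.natDegree - #S < d + 1 - #S)⟩
  have hquotient : Function.Injective quotient := by
    intro Q₁ Q₂ h
    refine Subtype.ext ?_
    rw [← mul_divByMonic_eq_of_dvd hmonic (nodal_dvd_of_eval_eq_zero Q₁.2.2.2),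
      ← mul_divByMonic_eq_of_dvd hmonic (nodal_dvd_of_eval_eq_zero Q₂.2.2.2)]
    exact congrArg (Lagrange.nodal S id * ·) (congrArg Subtype.val h)
  calc Nat.card (nonzeroVanishingOn d S) * Fintype.card F ^ #S
      ≤ Fintype.card F ^ (d + 1 - #S) * Fintype.card F ^ #S := by
        gcongr
        exact card_degreeLT (R := F) _ ▸ Nat.card_le_card_of_injective quotient hquotient
    _ = Fintype.card F ^ (d + 1) := by rw [← pow_add, Nat.sub_add_cancel (by omega)]

theorem card_vanishing_pairs_mul_pow_le (d₁ d₂ : ℕ) :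
    Nat.card {P : F[X] × F[X] // P.1 ≠ 0 ∧ P.2 ≠ 0 ∧ P.1.natDegree ≤ d₁ ∧ P.2.natDegree ≤ d₂ ∧
        ∀ x : F, P.1.eval x * P.2.eval x = 0} * Fintype.card F ^ Fintype.card F
      ≤ 2 ^ Fintype.card F * Fintype.card F ^ (d₁ + d₂ + 2) := by
  classical
  set q := Fintype.card F
  let split (P : {P : F[X] × F[X] // P.1 ≠ 0 ∧ P.2 ≠ 0 ∧ P.1.natDegree ≤ d₁ ∧
      P.2.natDegree ≤ d₂ ∧ ∀ x : F, P.1.eval x * P.2.eval x = 0}) :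
      Σ S : Finset F, nonzeroVanishingOn d₁ S × nonzeroVanishingOn d₂ Sᶜ :=
    let S := univ.filter fun x => P.1.1.eval x = 0
    ⟨S, ⟨P.1.1, P.2.1, P.2.2.2.1, fun _ ha => (mem_filter.mp ha).2⟩,
      ⟨P.1.2, P.2.2.1, P.2.2.2.2.1, fun a ha =>
        (mul_eq_zero.mp (P.2.2.2.2.2 a)).resolve_left fun h => mem_compl.mp ha (by simp [S, h])⟩⟩
  have hsplit : Function.Injective split := fun P Q h =>
    Subtype.ext <| Prod.ext (congrArg (fun z => z.2.1.1) h) (congrArg (fun z => z.2.2.1) h)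
  have hterm (S : Finset F) :
      Nat.card (nonzeroVanishingOn d₁ S) * Nat.card (nonzeroVanishingOn d₂ Sᶜ) * q ^ q
        ≤ q ^ (d₁ + d₂ + 2) := by
    calc _ = (Nat.card (nonzeroVanishingOn d₁ S) * q ^ #S) *
          (Nat.card (nonzeroVanishingOn d₂ Sᶜ) * q ^ #Sᶜ) := by
          have hq : q ^ q = q ^ #S * q ^ #Sᶜ := by rw [← pow_add, card_add_card_compl]
          rw [hq]
          ring
      _ ≤ q ^ (d₁ + 1) * q ^ (d₂ + 1) := by
          gcongr <;> exact card_nonzeroVanishingOn_mul_pow_le _ _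
      _ = q ^ (d₁ + d₂ + 2) := by ring
  calc _ ≤ Nat.card (Σ S : Finset F, nonzeroVanishingOn d₁ S × nonzeroVanishingOn d₂ Sᶜ) * q ^ q :=
        Nat.mul_le_mul_right _ (Nat.card_le_card_of_injective split hsplit)
    _ = ∑ S : Finset F,
          Nat.card (nonzeroVanishingOn d₁ S) * Nat.card (nonzeroVanishingOn d₂ Sᶜ) * q ^ q := by
        simp only [Nat.card_sigma, Nat.card_prod, sum_mul]
    _ ≤ ∑ _S : Finset F, q ^ (d₁ + d₂ + 2) := sum_le_sum fun S _ => hterm S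
    _ = 2 ^ q * q ^ (d₁ + d₂ + 2) := by rw [sum_const, card_univ, Fintype.card_finset, smul_eq_mul]

end Finite

end Polynomial

open Polynomial

theorem count_vanishing_pairs_le_general
    (ℓ : ℕ) (hℓ : ℓ.Prime) (d₁ d₂ : ℕ) :
    (Nat.card {P : Polynomial (ZMod ℓ) × Polynomial (ZMod ℓ) //
        P.1 ≠ 0 ∧ P.2 ≠ 0 ∧ P.1.natDegree ≤ d₁ ∧ P.2.natDegree ≤ d₂ ∧
        ∀ x : ZMod ℓ, P.1.eval x * P.2.eval x = 0} : ℝ)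
      ≤ 2 ^ ℓ * (ℓ : ℝ) ^ ((2 + d₁ + d₂ : ℤ) - (ℓ : ℤ)) := by
  have : Fact ℓ.Prime := ⟨hℓ⟩
  have hcount := card_vanishing_pairs_mul_pow_le (F := ZMod ℓ) d₁ d₂
  rw [ZMod.card] at hcount
  have hℓpos : (0 : ℝ) < ℓ := by exact_mod_cast hℓ.pos
  rw [zpow_sub₀ hℓpos.ne', zpow_natCast, ← mul_div_assoc, le_div_iff₀ (by positivity),
    show (2 + d₁ + d₂ : ℤ) = ((d₁ + d₂ + 2 : ℕ) : ℤ) by push_cast; ring, zpow_natCast]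
  exact_mod_cast hcount

/-- **Bound for the number of pairs of non-zero polynomials over `𝔽_ℓ` whose
product vanishes identically:** `N ≤ 2^ℓ · ℓ^{2+d₁+d₂−ℓ}`. -/
theorem count_vanishing_pairs_le
    (ℓ : ℕ) (hℓ : ℓ.Prime) (d₁ d₂ : ℕ) (hd₁ : 1 ≤ d₁) (hd₂ : 1 ≤ d₂) :
    (Nat.card {P : Polynomial (ZMod ℓ) × Polynomial (ZMod ℓ) //
        P.1 ≠ 0 ∧ P.2 ≠ 0 ∧ P.1.natDegree ≤ d₁ ∧ P.2.natDegree ≤ d₂ ∧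
        ∀ x : ZMod ℓ, P.1.eval x * P.2.eval x = 0} : ℝ)
      ≤ 2 ^ ℓ * (ℓ : ℝ) ^ ((2 + d₁ + d₂ : ℤ) - (ℓ : ℤ)) :=
  count_vanishing_pairs_le_general ℓ hℓ d₁ d₂
end

section
/- Let d₁, d₂ ≥ 3 be integers and d = d₁ + d₂. The number of pairs (P₁,P₂) of polynomials in (ℤ/4)[t] with deg Pᵢ ≤ dᵢ (i.e., coefficient tuples in (ℤ/4)^{d₁+1} × (ℤ/4)^{d₂+1}) satisfying both: (a) P₁(0) and P₂(0) are both odd, or P₁(1) and P₂(1) are both odd; and (b) Pᵢ(m) ≡ 1 (mod 4) for some i ∈ {1,2} and some m ∈ ℤ/4; equals 1743 · 4^{d−4}. In other words, the proportion σ₂ of such pairs among all 4^{d+2} pairs is 1743/4096. -/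
section Defs
/-- An element of `ℤ/4` is odd if it equals `1` or `3`. -/
def ZMod4.IsOdd (v : ZMod 4) : Prop := v = 1 ∨ v = 3
instance (v : ZMod 4) : Decidable (ZMod4.IsOdd v) := inferInstanceAs (Decidable (_ ∨ _))

def SPred {n₁ n₂ : ℕ} (c : (Fin n₁ → ZMod 4) × (Fin n₂ → ZMod 4)) : Prop :=
  ((ZMod4.IsOdd (∑ k, c.1 k * (0 : ZMod 4) ^ (k : ℕ)) ∧
          ZMod4.IsOdd (∑ k, c.2 k * (0 : ZMod 4) ^ (k : ℕ))) ∨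
         (ZMod4.IsOdd (∑ k, c.1 k * (1 : ZMod 4) ^ (k : ℕ)) ∧
          ZMod4.IsOdd (∑ k, c.2 k * (1 : ZMod 4) ^ (k : ℕ)))) ∧
        ((∃ m : ZMod 4, (∑ k, c.1 k * m ^ (k : ℕ)) = 1) ∨
         (∃ m : ZMod 4, (∑ k, c.2 k * m ^ (k : ℕ)) = 1))

instance {n₁ n₂ : ℕ} (c : (Fin n₁ → ZMod 4) × (Fin n₂ → ZMod 4)) : Decidable (SPred c) := by
  unfold SPred; infer_instance

noncomputable def NN (a b : ℕ) : ℕ := Nat.card {c : (Fin a → ZMod 4) × (Fin b → ZMod 4) // SPred c}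
end Defs

lemma zmod4_pow_period (m : ZMod 4) (i : ℕ) : m ^ (i + 2 + 2) = m ^ (i + 2) := by
  have h : ∀ x : ZMod 4, x ^ 2 * x ^ 2 = x ^ 2 := by decide
  calc m ^ (i + 2 + 2) = m ^ i * (m ^ 2 * m ^ 2) := by ring
    _ = m ^ i * m ^ 2 := by rw [h]
    _ = m ^ (i + 2) := by ring

lemma zmod4_pow_eq (m : ZMod 4) {i j : ℕ} (h2 : 2 ≤ j) (hij : i = j + 2) :
    m ^ i = m ^ j := by
  obtain ⟨k, rfl⟩ := Nat.exists_eq_add_of_le h2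
  subst hij
  rw [Nat.add_comm 2 k]
  exact zmod4_pow_period m k

/-- The coefficient-collapsing equivalence: for `n ≥ 3`, drop the top coefficient
(index `n+1`) of a tuple in `Fin (n+2) → ZMod 4`, adding it to coefficient `n-1`. -/
def collapseEquiv (n : ℕ) : (Fin (n + 2) → ZMod 4) ≃ ZMod 4 × (Fin (n + 1) → ZMod 4) where
  toFun c := (c (Fin.last (n + 1)),
    fun k => if k = (⟨n - 1, by omega⟩ : Fin (n + 1)) then c k.castSucc + c (Fin.last (n + 1))
      else c k.castSucc)
  invFun p := Fin.snoc (fun k => if k = (⟨n - 1, by omega⟩ : Fin (n + 1)) then p.2 k - p.1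
      else p.2 k) p.1
  left_inv c := by
    funext k
    induction k using Fin.lastCases with
    | last => simp
    | cast k =>
      simp only [Fin.snoc_castSucc]
      split <;> ring
  right_inv p := by
    refine Prod.ext ?_ ?_
    · simp
    · funext k
      simp only [Fin.snoc_castSucc, Fin.snoc_last]
      split <;> ring

lemma collapseEquiv_val (n : ℕ) (hn : 3 ≤ n) (c : Fin (n + 2) → ZMod 4) (m : ZMod 4) :
    (∑ k, ((collapseEquiv n c).2) k * m ^ (k : ℕ)) = ∑ k, c k * m ^ (k : ℕ) := by
  set j : Fin (n + 1) := (⟨n - 1, by omega⟩ : Fin (n + 1)) with hj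
  have h1 : ∀ k : Fin (n + 1), ((collapseEquiv n c).2) k * m ^ (k : ℕ) =
      c k.castSucc * m ^ (k : ℕ) + (if k = j then c (Fin.last (n + 1)) * m ^ (k : ℕ) else 0) := by
    intro k
    simp only [collapseEquiv, Equiv.coe_fn_mk, ← hj]
    split <;> ring
  rw [Finset.sum_congr rfl (fun k _ => h1 k), Finset.sum_add_distrib,
    Finset.sum_ite_eq' Finset.univ j (fun k => c (Fin.last (n + 1)) * m ^ (k : ℕ)),
    if_pos (Finset.mem_univ j)]
  rw [Fin.sum_univ_castSucc (fun k : Fin (n + 2) => c k * m ^ (k : ℕ))]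
  have hpow : m ^ ((Fin.last (n + 1) : Fin (n + 2)) : ℕ) = m ^ (j : ℕ) := by
    apply zmod4_pow_eq m (j := n - 1) (by omega)
    simp [Fin.last]
    omega
  rw [hpow]
  simp

/-- The generic one-step reduction. -/
lemma card_step (n : ℕ) (hn : 3 ≤ n) (β : Type) (Q : (ZMod 4 → ZMod 4) → β → Prop) :
    Nat.card {p : (Fin (n + 2) → ZMod 4) × β // Q (fun m => ∑ k, p.1 k * m ^ (k : ℕ)) p.2}
    = 4 * Nat.card {p : (Fin (n + 1) → ZMod 4) × β //
        Q (fun m => ∑ k, p.1 k * m ^ (k : ℕ)) p.2} := by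
  have E : {p : (Fin (n + 2) → ZMod 4) × β // Q (fun m => ∑ k, p.1 k * m ^ (k : ℕ)) p.2}
      ≃ ZMod 4 × {p : (Fin (n + 1) → ZMod 4) × β //
        Q (fun m => ∑ k, p.1 k * m ^ (k : ℕ)) p.2} :=
    { toFun := fun x => ((collapseEquiv n x.1.1).1,
        ⟨((collapseEquiv n x.1.1).2, x.1.2), by
          have := x.2
          simpa [fun m => collapseEquiv_val n hn x.1.1 m] using this⟩)
      invFun := fun y => ⟨((collapseEquiv n).symm (y.1, y.2.1.1), y.2.1.2), by
        have := y.2.2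
        have hv := fun m => collapseEquiv_val n hn ((collapseEquiv n).symm (y.1, y.2.1.1)) m
        simp only [Equiv.apply_symm_apply] at hv
        simpa [fun m => (hv m).symm] using this⟩
      left_inv := fun x => by
        apply Subtype.ext
        simp
      right_inv := fun y => by
        apply Prod.ext
        · simp
        · apply Subtype.ext
          simp }
  rw [Nat.card_congr E, Nat.card_prod]
  congr 1
  rw [Nat.card_zmod]

lemma card_step₂ (n : ℕ) (hn : 3 ≤ n) (β : Type) (Q : β → (ZMod 4 → ZMod 4) → Prop) :
    Nat.card {p : β × (Fin (n + 2) → ZMod 4) // Q p.1 (fun m => ∑ k, p.2 k * m ^ (k : ℕ))}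
    = 4 * Nat.card {p : β × (Fin (n + 1) → ZMod 4) //
        Q p.1 (fun m => ∑ k, p.2 k * m ^ (k : ℕ))} := by
  have e1 : {p : β × (Fin (n + 2) → ZMod 4) // Q p.1 (fun m => ∑ k, p.2 k * m ^ (k : ℕ))}
      ≃ {p : (Fin (n + 2) → ZMod 4) × β // Q p.2 (fun m => ∑ k, p.1 k * m ^ (k : ℕ))} :=
    Equiv.subtypeEquiv (Equiv.prodComm _ _) (fun p => Iff.rfl)
  have e2 : {p : β × (Fin (n + 1) → ZMod 4) // Q p.1 (fun m => ∑ k, p.2 k * m ^ (k : ℕ))}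
      ≃ {p : (Fin (n + 1) → ZMod 4) × β // Q p.2 (fun m => ∑ k, p.1 k * m ^ (k : ℕ))} :=
    Equiv.subtypeEquiv (Equiv.prodComm _ _) (fun p => Iff.rfl)
  rw [Nat.card_congr e1, Nat.card_congr e2]
  exact card_step n hn β (fun f b => Q b f)

lemma NN_step1 (n b : ℕ) (hn : 3 ≤ n) : NN (n + 2) b = 4 * NN (n + 1) b :=
  card_step n hn (Fin b → ZMod 4) (fun f c₂ =>
    ((ZMod4.IsOdd (f 0) ∧ ZMod4.IsOdd (∑ k, c₂ k * (0 : ZMod 4) ^ (k : ℕ))) ∨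
     (ZMod4.IsOdd (f 1) ∧ ZMod4.IsOdd (∑ k, c₂ k * (1 : ZMod 4) ^ (k : ℕ)))) ∧
    ((∃ m : ZMod 4, f m = 1) ∨ (∃ m : ZMod 4, (∑ k, c₂ k * m ^ (k : ℕ)) = 1)))

lemma NN_step2 (a n : ℕ) (hn : 3 ≤ n) : NN a (n + 2) = 4 * NN a (n + 1) :=
  card_step₂ n hn (Fin a → ZMod 4) (fun c₁ f =>
    ((ZMod4.IsOdd (∑ k, c₁ k * (0 : ZMod 4) ^ (k : ℕ)) ∧ ZMod4.IsOdd (f 0)) ∨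
     (ZMod4.IsOdd (∑ k, c₁ k * (1 : ZMod 4) ^ (k : ℕ)) ∧ ZMod4.IsOdd (f 1))) ∧
    ((∃ m : ZMod 4, (∑ k, c₁ k * m ^ (k : ℕ)) = 1) ∨ (∃ m : ZMod 4, f m = 1)))

lemma NN_red1 (a : ℕ) (ha : 3 ≤ a) (b : ℕ) : NN (a + 1) b = 4 ^ (a - 3) * NN 4 b := by
  induction a, ha using Nat.le_induction with
  | base => simp
  | succ n hn ih =>
    have : n + 1 + 1 = n + 2 := rfl
    rw [this, NN_step1 n b hn, ih]
    have h3 : n + 1 - 3 = (n - 3) + 1 := by omega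
    rw [h3, pow_succ]
    ring

lemma NN_red2 (b : ℕ) (hb : 3 ≤ b) (a : ℕ) : NN a (b + 1) = 4 ^ (b - 3) * NN a 4 := by
  induction b, hb using Nat.le_induction with
  | base => simp
  | succ n hn ih =>
    have : n + 1 + 1 = n + 2 := rfl
    rw [this, NN_step2 a n hn, ih]
    have h3 : n + 1 - 3 = (n - 3) + 1 := by omega
    rw [h3, pow_succ]
    ring

set_option maxRecDepth 100000 in
set_option maxHeartbeats 8000000 in
lemma base_sum : (∑ c₁ : Fin 4 → ZMod 4, ∑ c₂ : Fin 4 → ZMod 4,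
    if ((ZMod4.IsOdd (∑ k, c₁ k * (0 : ZMod 4) ^ (k : ℕ)) ∧
          ZMod4.IsOdd (∑ k, c₂ k * (0 : ZMod 4) ^ (k : ℕ))) ∨
         (ZMod4.IsOdd (∑ k, c₁ k * (1 : ZMod 4) ^ (k : ℕ)) ∧
          ZMod4.IsOdd (∑ k, c₂ k * (1 : ZMod 4) ^ (k : ℕ)))) ∧
        ((∃ m : ZMod 4, (∑ k, c₁ k * m ^ (k : ℕ)) = 1) ∨
         (∃ m : ZMod 4, (∑ k, c₂ k * m ^ (k : ℕ)) = 1))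
    then 1 else 0) = 27888 := by
  decide

lemma NN_base : NN 4 4 = 27888 := by
  rw [NN, Nat.card_eq_fintype_card, Fintype.card_subtype, Finset.card_filter,
    ← Finset.univ_product_univ, Finset.sum_product]
  exact base_sum

/-- **The local density `σ₂ = 1743/4096` at the prime `2`.**
The number of pairs of coefficient tuples `(c₁,c₂)` over `ℤ/4` of lengths
`d₁+1`, `d₂+1` satisfying (a) `P₁(0), P₂(0)` both odd or `P₁(1), P₂(1)` both
odd, and (b) `Pᵢ(m) = 1` for some `i` and some `m ∈ ℤ/4`, equals
`1743·4^{d−4}` where `d = d₁+d₂`. -/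
theorem count_sigma_two (d₁ d₂ : ℕ) (hd₁ : 3 ≤ d₁) (hd₂ : 3 ≤ d₂) :
    Nat.card {c : (Fin (d₁ + 1) → ZMod 4) × (Fin (d₂ + 1) → ZMod 4) //
        ((ZMod4.IsOdd (∑ k, c.1 k * (0 : ZMod 4) ^ (k : ℕ)) ∧
          ZMod4.IsOdd (∑ k, c.2 k * (0 : ZMod 4) ^ (k : ℕ))) ∨
         (ZMod4.IsOdd (∑ k, c.1 k * (1 : ZMod 4) ^ (k : ℕ)) ∧
          ZMod4.IsOdd (∑ k, c.2 k * (1 : ZMod 4) ^ (k : ℕ)))) ∧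
        ((∃ m : ZMod 4, (∑ k, c.1 k * m ^ (k : ℕ)) = 1) ∨
         (∃ m : ZMod 4, (∑ k, c.2 k * m ^ (k : ℕ)) = 1))}
      = 1743 * 4 ^ (d₁ + d₂ - 4) := by
  show NN (d₁ + 1) (d₂ + 1) = _
  rw [NN_red1 d₁ hd₁, NN_red2 d₂ hd₂, NN_base]
  obtain ⟨a, rfl⟩ := Nat.exists_eq_add_of_le hd₁
  obtain ⟨b, rfl⟩ := Nat.exists_eq_add_of_le hd₂
  have h1 : 3 + a - 3 = a := by omega
  have h2 : 3 + b - 3 = b := by omega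
  have h3 : 3 + a + (3 + b) - 4 = a + b + 2 := by omega
  rw [h1, h2, h3, pow_add, pow_add]
  norm_num
  ring
end

section
/- Let 𝒫 = (1743/4096) · ∏_{primes ℓ ≥ 3} (1 − (2/ℓ − 1/ℓ²)^ℓ) and 𝒫₀ = (1743/4096) · ∏_{ℓ ∈ {3,5,7,11,13}} (1 − (2/ℓ − 1/ℓ²)^ℓ). Then 𝒫₀ · ∏_{primes ℓ ≥ 17} (1 − 1/ℓ⁴) < 𝒫 < 𝒫₀. -/
/-!
Write `δ ℓ = (2/ℓ - 1/ℓ²)^ℓ` (`defect ℓ` below). For `ℓ ≥ 16` one has `δ ℓ < (2/ℓ)^ℓ ≤ 1/ℓ⁴` because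
`2^ℓ ℓ⁴ ≤ 16^(ℓ-4) ℓ⁴ ≤ ℓ^ℓ`. So both `δ` and `ℓ ↦ 1/ℓ⁴` are summable over the primes `ℓ ≥ 17`,
the products of `1 - δ ℓ` and `1 - 1/ℓ⁴` converge, and taking logarithms turns the strict
termwise comparisons `1 - 1/ℓ⁴ < 1 - δ ℓ < 1` into strict comparisons of the products. Splitting
off the primes `3, …, 13` from the product over all primes `ℓ ≥ 3` gives both inequalities.
-/

namespace Real

variable {ι : Type*} {a b : ι → ℝ}

theorem summable_log_one_sub_of_summable (hb : Summable b) :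
    Summable fun i ↦ log (1 - b i) := by
  simpa [sub_eq_add_neg] using summable_log_one_add_of_summable hb.neg

theorem multipliable_one_sub_of_summable (hb : Summable b) :
    Multipliable fun i ↦ 1 - b i := by
  simpa [sub_eq_add_neg] using Real.multipliable_one_add_of_summable hb.neg

theorem tprod_one_sub_lt_tprod_one_sub (hb : Summable b) (ha : ∀ i, 0 ≤ a i)
    (hab : ∀ i, a i ≤ b i) (hb₁ : ∀ i, b i < 1) {i : ι} (hi : a i < b i) :
    ∏' j, (1 - b j) < ∏' j, (1 - a j) := by
  have hsa : Summable a := hb.of_nonneg_of_le ha hab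
  have hpos_b : ∀ j, 0 < 1 - b j := fun j ↦ sub_pos.2 (hb₁ j)
  have hpos_a : ∀ j, 0 < 1 - a j := fun j ↦ by linarith [hab j, hb₁ j]
  rw [← rexp_tsum_eq_tprod hpos_b (summable_log_one_sub_of_summable hb),
    ← rexp_tsum_eq_tprod hpos_a (summable_log_one_sub_of_summable hsa)]
  exact exp_lt_exp.2 <| Summable.tsum_lt_tsum (i := i)
    (fun j ↦ log_le_log (hpos_b j) (by linarith [hab j])) (log_lt_log (hpos_b i) (by linarith))
    (summable_log_one_sub_of_summable hb) (summable_log_one_sub_of_summable hsa)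

theorem tprod_one_sub_lt_one (hb : Summable b) (hb₀ : ∀ i, 0 ≤ b i) (hb₁ : ∀ i, b i < 1)
    {i : ι} (hi : 0 < b i) : ∏' j, (1 - b j) < 1 := by
  simpa using tprod_one_sub_lt_tprod_one_sub (a := 0) hb (fun _ ↦ le_rfl) hb₀ hb₁ hi

end Real

theorem two_div_sub_one_div_sq_mem_Ioo {x : ℝ} (hx : 1 < x) :
    2 / x - 1 / x ^ 2 ∈ Set.Ioo 0 1 := by
  have hx₀ : x ≠ 0 := by positivity
  have hsq : 2 / x - 1 / x ^ 2 = 1 - (1 - 1 / x) ^ 2 := by field_simp; ring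
  have hinv : 1 / x ∈ Set.Ioo 0 1 := ⟨by positivity, (div_lt_one (by positivity)).2 hx⟩
  rw [hsq]
  constructor <;> nlinarith [hinv.1, hinv.2]

theorem two_pow_mul_pow_four_le_pow_self {ℓ : ℕ} (hℓ : 16 ≤ ℓ) : 2 ^ ℓ * ℓ ^ 4 ≤ ℓ ^ ℓ :=
  calc 2 ^ ℓ * ℓ ^ 4 ≤ 2 ^ (4 * (ℓ - 4)) * ℓ ^ 4 := by gcongr <;> omega
    _ = 16 ^ (ℓ - 4) * ℓ ^ 4 := by rw [pow_mul]; norm_num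
    _ ≤ ℓ ^ (ℓ - 4) * ℓ ^ 4 := by gcongr
    _ = ℓ ^ ℓ := by rw [← pow_add, Nat.sub_add_cancel (by omega)]

noncomputable def defect (ℓ : ℕ) : ℝ := (2 / ℓ - 1 / ℓ ^ 2) ^ ℓ

theorem defect_pos {ℓ : ℕ} (hℓ : 2 ≤ ℓ) : 0 < defect ℓ :=
  pow_pos (two_div_sub_one_div_sq_mem_Ioo (by exact_mod_cast hℓ)).1 ℓ

theorem defect_lt_one {ℓ : ℕ} (hℓ : 2 ≤ ℓ) : defect ℓ < 1 := by
  have h := two_div_sub_one_div_sq_mem_Ioo (x := ℓ) (by exact_mod_cast hℓ)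
  exact pow_lt_one₀ h.1.le h.2 (by omega)

theorem defect_lt_one_div_pow_four {ℓ : ℕ} (hℓ : 16 ≤ ℓ) : defect ℓ < 1 / (ℓ : ℝ) ^ 4 := by
  have hbase := two_div_sub_one_div_sq_mem_Ioo (x := ℓ) (by exact_mod_cast (by omega : 1 < ℓ))
  calc defect ℓ < (2 / ℓ) ^ ℓ :=
        pow_lt_pow_left₀ (sub_lt_self _ (by positivity)) hbase.1.le (by omega)
    _ ≤ 1 / (ℓ : ℝ) ^ 4 := by
        rw [div_pow, div_le_div_iff₀ (by positivity) (by positivity), one_mul]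
        exact_mod_cast two_pow_mul_pow_four_le_pow_self hℓ

theorem one_div_pow_four_lt_one {ℓ : ℕ} (hℓ : 2 ≤ ℓ) : 1 / (ℓ : ℝ) ^ 4 < 1 :=
  (div_lt_one (by positivity)).2 (one_lt_pow₀ (by exact_mod_cast hℓ) (by norm_num))

theorem summable_one_div_pow_four_subtype (s : Set ℕ) :
    Summable fun ℓ : s ↦ 1 / ((ℓ : ℕ) : ℝ) ^ 4 :=
  (Real.summable_one_div_nat_pow.2 (by norm_num)).subtype s

theorem summable_defect_subtype {s : Set ℕ} (hs : ∀ ℓ ∈ s, 16 ≤ ℓ) :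
    Summable fun ℓ : s ↦ defect ℓ :=
  (summable_one_div_pow_four_subtype s).of_nonneg_of_le
    (fun ℓ ↦ (defect_pos (by linarith [hs ℓ ℓ.2])).le)
    (fun ℓ ↦ (defect_lt_one_div_pow_four (hs ℓ ℓ.2)).le)

theorem setOf_prime_three_le_eq_union :
    {ℓ : ℕ | ℓ.Prime ∧ 3 ≤ ℓ} = ↑({3, 5, 7, 11, 13} : Finset ℕ) ∪ {ℓ | ℓ.Prime ∧ 17 ≤ ℓ} := by
  ext ℓ
  simp only [Set.mem_ofPred_eq, Set.mem_union, Finset.coe_insert, Finset.coe_singleton,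
    Set.mem_insert_iff, Set.mem_singleton_iff]
  constructor
  · rintro ⟨hp, h3⟩
    by_cases h17 : 17 ≤ ℓ
    · exact Or.inr ⟨hp, h17⟩
    · interval_cases ℓ <;> simp_all +decide
  · rintro (h | ⟨hp, h17⟩)
    · rcases h with rfl | rfl | rfl | rfl | rfl <;> norm_num
    · exact ⟨hp, by omega⟩

theorem tprod_prime_three_le_eq {f : ℕ → ℝ}
    (hf : Multipliable fun ℓ : {ℓ : ℕ // ℓ.Prime ∧ 17 ≤ ℓ} ↦ f ℓ) :
    ∏' ℓ : {ℓ : ℕ // ℓ.Prime ∧ 3 ≤ ℓ}, f ℓ =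
      (∏ ℓ ∈ ({3, 5, 7, 11, 13} : Finset ℕ), f ℓ) *
        ∏' ℓ : {ℓ : ℕ // ℓ.Prime ∧ 17 ≤ ℓ}, f ℓ := by
  have hdisj : Disjoint (↑({3, 5, 7, 11, 13} : Finset ℕ) : Set ℕ) {ℓ | ℓ.Prime ∧ 17 ≤ ℓ} :=
    Set.disjoint_left.2 fun ℓ hS hB ↦ by
      simp only [Finset.coe_insert, Finset.coe_singleton, Set.mem_insert_iff,
        Set.mem_singleton_iff] at hS
      have := hB.2
      omega
  change ∏' ℓ : ↑{ℓ : ℕ | ℓ.Prime ∧ 3 ≤ ℓ}, f ℓ = _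
  rw [setOf_prime_three_le_eq_union, Multipliable.tprod_union_disjoint hdisj
    (Finset.multipliable _ f) hf, Finset.tprod_subtype']
  rfl

/-- **Rigorous bracketing of the limiting density.**
With `𝒫 = (1743/4096)·∏_{ℓ ≥ 3 prime}(1 − (2/ℓ − 1/ℓ²)^ℓ)` and
`𝒫₀ = (1743/4096)·∏_{ℓ ∈ {3,5,7,11,13}}(1 − (2/ℓ − 1/ℓ²)^ℓ)`, one has
`𝒫₀·∏_{ℓ ≥ 17 prime}(1 − 1/ℓ⁴) < 𝒫 < 𝒫₀`. -/
theorem limiting_density_bracketing :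
    ((1743 / 4096 : ℝ) *
        (∏ ℓ ∈ ({3, 5, 7, 11, 13} : Finset ℕ),
          (1 - (2 / (ℓ : ℝ) - 1 / (ℓ : ℝ) ^ 2) ^ ℓ))) *
      (∏' ℓ : {ℓ : ℕ // ℓ.Prime ∧ 17 ≤ ℓ}, (1 - 1 / ((ℓ : ℕ) : ℝ) ^ 4))
      < (1743 / 4096 : ℝ) *
        (∏' ℓ : {ℓ : ℕ // ℓ.Prime ∧ 3 ≤ ℓ},
          (1 - (2 / ((ℓ : ℕ) : ℝ) - 1 / ((ℓ : ℕ) : ℝ) ^ 2) ^ (ℓ : ℕ))) ∧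
    (1743 / 4096 : ℝ) *
        (∏' ℓ : {ℓ : ℕ // ℓ.Prime ∧ 3 ≤ ℓ},
          (1 - (2 / ((ℓ : ℕ) : ℝ) - 1 / ((ℓ : ℕ) : ℝ) ^ 2) ^ (ℓ : ℕ)))
      < (1743 / 4096 : ℝ) *
        (∏ ℓ ∈ ({3, 5, 7, 11, 13} : Finset ℕ),
          (1 - (2 / (ℓ : ℝ) - 1 / (ℓ : ℝ) ^ 2) ^ ℓ)) := by
  have h16 : ∀ ℓ ∈ {ℓ : ℕ | ℓ.Prime ∧ 17 ≤ ℓ}, 16 ≤ ℓ := fun ℓ hℓ ↦ by have := hℓ.2; omega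
  have h2 : ∀ ℓ : {ℓ : ℕ // ℓ.Prime ∧ 17 ≤ ℓ}, 2 ≤ (ℓ : ℕ) := fun ℓ ↦ by have := ℓ.2.2; omega
  have h17 : (17 : ℕ).Prime ∧ 17 ≤ 17 := ⟨by norm_num, le_rfl⟩
  have hsplit := tprod_prime_three_le_eq (f := fun ℓ ↦ 1 - defect ℓ)
    (Real.multipliable_one_sub_of_summable (summable_defect_subtype h16))
  have hlower := Real.tprod_one_sub_lt_tprod_one_sub (i := ⟨17, h17⟩)
    (summable_one_div_pow_four_subtype _) (fun ℓ ↦ (defect_pos (h2 ℓ)).le)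
    (fun ℓ ↦ (defect_lt_one_div_pow_four (h16 ℓ ℓ.2)).le) (fun ℓ ↦ one_div_pow_four_lt_one (h2 ℓ))
    (defect_lt_one_div_pow_four (by norm_num))
  have hupper := Real.tprod_one_sub_lt_one (i := ⟨17, h17⟩) (summable_defect_subtype h16)
    (fun ℓ ↦ (defect_pos (h2 ℓ)).le) (fun ℓ ↦ defect_lt_one (h2 ℓ)) (defect_pos (by norm_num))
  have hC : 0 < 1743 / 4096 * ∏ ℓ ∈ ({3, 5, 7, 11, 13} : Finset ℕ), (1 - defect ℓ) :=
    mul_pos (by norm_num) <| Finset.prod_pos fun ℓ hℓ ↦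
      sub_pos.2 <| defect_lt_one (by simp only [Finset.mem_insert, Finset.mem_singleton] at hℓ; omega)
  unfold defect at hsplit hC
  rw [hsplit, ← mul_assoc]
  exact ⟨mul_lt_mul_of_pos_left hlower hC, (mul_lt_mul_of_pos_left hupper hC).trans_eq (mul_one _)⟩
end
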